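/- arXiv:2307.07174 — 2 statements merged into one kernel-verified Lean document; each statement's English description precedes it below -/
import Mathlib

section
/- Consider a customer attraction game in which every agent has weight 1, every node has value 1, and every strategy in every strategy space is a nonempty subset of N. Let m = |A|, n = |N|, H_m = ∑_{k=1}^{m} 1/k, and fix 0 < ε < 1. Suppose S^0, S^1, …, S^T is a sequence of strategy profiles such that for each t < T there is an agent i_t and a strategy S' ∈ 𝒮_{i_t} with S^{t+1} = (S', S^t_{-i_t}) and U_{i_t}(S^{t+1}) > (1+ε) · U_{i_t}(S^t). Then T < ε^{-1} · n · m · H_m. In particular, best-response dynamics reaches a profile in which no agent can improve her utility by a factor exceeding 1+ε within ε^{-1} n m H_m steps. -/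
open Finset

/-- A customer attraction game: nodes `N` with integer values `≥ 1`, agents `A`
with integer weights `≥ 1`, and a nonempty finite strategy space (a finite set of
subsets of `N`) for each agent. -/
structure CAG (N A : Type*) [Fintype N] [Fintype A] where
  v : N → ℕ
  v_pos : ∀ j, 1 ≤ v j
  w : A → ℕ
  w_pos : ∀ i, 1 ≤ w i
  strat : A → Finset (Finset N)
  strat_ne : ∀ i, (strat i).Nonempty

variable {N A : Type*} [Fintype N] [Fintype A] [DecidableEq N]

/-- The load `c(j,S)` of node `j`: total weight of agents attracting `j`. -/
def CAG.load (G : CAG N A) (S : A → Finset N) (j : N) : ℕ :=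
  ∑ i : A, if j ∈ S i then G.w i else 0

/-- The utility `U_i(S) = ∑_{j ∈ S_i} v_j · w_i / c(j,S)`. -/
noncomputable def CAG.util (G : CAG N A) (S : A → Finset N) (i : A) : ℝ :=
  ∑ j ∈ S i, (G.v j : ℝ) * (G.w i : ℝ) / (G.load S j : ℝ)

/-- A strategy profile: each agent plays a strategy from her strategy space. -/
def CAG.valid (G : CAG N A) (S : A → Finset N) : Prop :=
  ∀ i, S i ∈ G.strat i

/-- Pure Nash equilibrium. -/
def CAG.PNE [DecidableEq A] (G : CAG N A) (S : A → Finset N) : Prop :=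
  G.valid S ∧ ∀ i, ∀ S' ∈ G.strat i, G.util (Function.update S i S') i ≤ G.util S i

/-- Social welfare. -/
noncomputable def CAG.sw (G : CAG N A) (S : A → Finset N) : ℝ :=
  ∑ i : A, G.util S i

/-- The harmonic number `H_c = ∑_{k=1}^{c} 1/k`. -/
noncomputable def harm (c : ℕ) : ℝ := ∑ k ∈ Finset.range c, (1 : ℝ) / (k + 1)

/-- Rosenthal-type potential `Φ(S) = ∑_j v_j ∑_{k=1}^{c(j,S)} 1/k`. -/
noncomputable def CAG.pot (G : CAG N A) (S : A → Finset N) : ℝ :=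
  ∑ j : N, (G.v j : ℝ) * harm (G.load S j)

/-!
With unit weights, `Φ(S) = ∑_j v_j H_{c(j,S)}` is an exact potential: a unilateral deviation
changes `Φ` by precisely the deviator's change in utility. Every played strategy is nonempty and
every load is at most `m`, so each agent earns at least `1/m`; hence a `(1+ε)`-improving step
raises `Φ` by more than `ε/m`. As `0 < Φ ≤ n H_m` throughout, fewer than `ε⁻¹ n m H_m` such
steps fit.
-/

lemma harm_succ (c : ℕ) : harm (c + 1) = harm c + 1 / ((c : ℝ) + 1) :=
  Finset.sum_range_succ _ _

lemma harm_mono : Monotone harm := fun _ _ h =>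
  Finset.sum_le_sum_of_subset_of_nonneg (Finset.range_subset_range.2 h)
    fun _ _ _ => by positivity

lemma harm_pos {c : ℕ} (hc : 0 < c) : 0 < harm c :=
  Finset.sum_pos (fun _ _ => by positivity) (Finset.nonempty_range_iff.2 hc.ne')

namespace CAG

section

variable {G : CAG N A}

lemma one_le_load {S : A → Finset N} {i : A} {j : N} (hj : j ∈ S i) : 1 ≤ G.load S j :=
  (G.w_pos i).trans (by
    simpa [load, hj] using Finset.single_le_sum (f := fun i' => if j ∈ S i' then G.w i' else 0)
      (fun _ _ => Nat.zero_le _) (Finset.mem_univ i))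

lemma load_le_card (hw : ∀ i, G.w i = 1) (S : A → Finset N) (j : N) :
    G.load S j ≤ Fintype.card A :=
  (Finset.sum_le_card_nsmul _ _ 1 fun i _ => by split <;> simp [hw]).trans (by simp)

lemma pot_le (hw : ∀ i, G.w i = 1) (S : A → Finset N) :
    G.pot S ≤ (∑ j, (G.v j : ℝ)) * harm (Fintype.card A) := by
  rw [pot, Finset.sum_mul]
  exact Finset.sum_le_sum fun j _ =>
    mul_le_mul_of_nonneg_left (harm_mono (load_le_card hw S j)) (Nat.cast_nonneg _)

lemma pot_pos {S : A → Finset N} {i : A} (hS : (S i).Nonempty) : 0 < G.pot S := by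
  obtain ⟨j, hj⟩ := hS
  have hv : (0 : ℝ) < G.v j := by exact_mod_cast G.v_pos j
  refine Finset.sum_pos' (fun k _ => ?_) ⟨j, Finset.mem_univ j, ?_⟩
  · exact mul_nonneg (Nat.cast_nonneg _) (harm_mono (Nat.zero_le _))
  · exact mul_pos hv (harm_pos (one_le_load hj))

lemma inv_card_le_util (hw : ∀ i, G.w i = 1) {S : A → Finset N} {i : A} (hS : (S i).Nonempty) :
    (Fintype.card A : ℝ)⁻¹ ≤ G.util S i := by
  obtain ⟨j, hj⟩ := hS
  have hterm : ∀ k ∈ S i, (Fintype.card A : ℝ)⁻¹ ≤ (G.v k : ℝ) * G.w i / G.load S k := by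
    intro k hk
    have hk1 : (1 : ℝ) ≤ G.load S k := by exact_mod_cast one_le_load hk
    have hv : (1 : ℝ) ≤ G.v k := by exact_mod_cast G.v_pos k
    rw [hw, Nat.cast_one, mul_one, ← one_div]
    exact div_le_div₀ (by positivity) hv (zero_lt_one.trans_le hk1) (by exact_mod_cast load_le_card hw S k)
  have hnonneg : ∀ k ∈ S i, (0 : ℝ) ≤ G.v k * G.w i / G.load S k := fun _ _ => by positivity
  exact (hterm j hj).trans (Finset.single_le_sum hnonneg hj)

end

variable [DecidableEq A] (G : CAG N A)

def loadOthers (S : A → Finset N) (i : A) (j : N) : ℕ :=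
  ∑ i' ∈ Finset.univ.erase i, if j ∈ S i' then G.w i' else 0

lemma load_update (S : A → Finset N) (i : A) (s : Finset N) (j : N) :
    G.load (Function.update S i s) j = G.loadOthers S i j + if j ∈ s then G.w i else 0 := by
  rw [load, ← Finset.sum_erase_add _ _ (Finset.mem_univ i), Function.update_self, loadOthers]
  congr 1
  exact Finset.sum_congr rfl fun i' hi' => by rw [Function.update_of_ne (Finset.ne_of_mem_erase hi')]

lemma load_eq_loadOthers_add (S : A → Finset N) (i : A) (j : N) :
    G.load S j = G.loadOthers S i j + if j ∈ S i then G.w i else 0 := by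
  rw [← G.load_update, Function.update_eq_self]

lemma util_update_self {G : CAG N A} (hw : ∀ i, G.w i = 1) (S : A → Finset N) (i : A)
    (s : Finset N) :
    G.util (Function.update S i s) i = ∑ j ∈ s, (G.v j : ℝ) / (G.loadOthers S i j + 1) := by
  rw [util, Function.update_self]
  refine Finset.sum_congr rfl fun j hj => ?_
  rw [load_update, if_pos hj, hw]
  push_cast
  ring

lemma util_eq_sum_loadOthers {G : CAG N A} (hw : ∀ i, G.w i = 1) (S : A → Finset N) (i : A) :
    G.util S i = ∑ j ∈ S i, (G.v j : ℝ) / (G.loadOthers S i j + 1) := by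
  rw [← util_update_self hw, Function.update_eq_self]

lemma pot_update_sub_pot {G : CAG N A} (hw : ∀ i, G.w i = 1) (S : A → Finset N) (i : A)
    (s : Finset N) :
    G.pot (Function.update S i s) - G.pot S =
      G.util (Function.update S i s) i - G.util S i := by
  have hnode : ∀ j, (G.v j : ℝ) * harm (G.load (Function.update S i s) j) -
      (G.v j : ℝ) * harm (G.load S j) =
        (if j ∈ s then (G.v j : ℝ) / (G.loadOthers S i j + 1) else 0) -
          (if j ∈ S i then (G.v j : ℝ) / (G.loadOthers S i j + 1) else 0) := by
    intro j
    -- `H_{L+1} - H_L = 1/(L+1)` is exactly agent `i`'s share of `j` when she joins `L` others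
    rw [load_update, G.load_eq_loadOthers_add S i, hw]
    by_cases hs : j ∈ s <;> by_cases hS : j ∈ S i <;> simp [hs, hS, harm_succ] <;> ring
  rw [util_update_self hw, util_eq_sum_loadOthers hw, pot, pot, ← Finset.sum_sub_distrib,
    Finset.sum_congr rfl fun j _ => hnode j, Finset.sum_sub_distrib,
    Finset.sum_ite_mem, Finset.sum_ite_mem, Finset.univ_inter, Finset.univ_inter]

variable {G}

def IsImprovingStep (ε : ℝ) (S S' : A → Finset N) : Prop :=
  ∃ i, ∃ s ∈ G.strat i, S' = Function.update S i s ∧ (1 + ε) * G.util S i < G.util S' i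

lemma IsImprovingStep.valid {ε : ℝ} {S S' : A → Finset N} (h : G.IsImprovingStep ε S S')
    (hS : G.valid S) : G.valid S' := by
  obtain ⟨i, s, hs, rfl, -⟩ := h
  intro i'
  rcases eq_or_ne i' i with rfl | hi
  · rwa [Function.update_self]
  · rw [Function.update_of_ne hi]
    exact hS i'

lemma IsImprovingStep.pot_add_lt (hw : ∀ i, G.w i = 1) (hne : ∀ i, ∀ s ∈ G.strat i, s.Nonempty)
    {ε : ℝ} (hε : 0 < ε) {S S' : A → Finset N} (h : G.IsImprovingStep ε S S')
    (hS : G.valid S) : G.pot S + ε / Fintype.card A < G.pot S' := by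
  obtain ⟨i, s, -, rfl, himp⟩ := h
  have hU := inv_card_le_util hw (hne i _ (hS i))
  have hdiff := pot_update_sub_pot hw S i s
  rw [div_eq_mul_inv]
  nlinarith

lemma valid_of_isImprovingStep {ε : ℝ} {S : ℕ → A → Finset N} {T : ℕ} (h0 : G.valid (S 0))
    (hstep : ∀ t < T, G.IsImprovingStep ε (S t) (S (t + 1))) : ∀ t ≤ T, G.valid (S t) := by
  intro t
  induction t with
  | zero => exact fun _ => h0
  | succ t ih => exact fun ht => (hstep t ht).valid (ih (Nat.le_of_succ_le ht))

end CAG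

lemma add_mul_le_of_add_le_succ {f : ℕ → ℝ} {δ : ℝ} {T : ℕ}
    (h : ∀ t < T, f t + δ ≤ f (t + 1)) : f 0 + T * δ ≤ f T := by
  induction T with
  | zero => simp
  | succ T ih =>
    have := ih fun t ht => h t (ht.trans (Nat.lt_succ_self T))
    have := h T (Nat.lt_succ_self T)
    push_cast
    linarith

theorem best_response_dynamics_length_bound_general [DecidableEq A] [Nonempty A]
    (G : CAG N A) (hw : ∀ i, G.w i = 1) (hv : ∀ j, G.v j = 1)
    (hne : ∀ i, ∀ s ∈ G.strat i, s.Nonempty)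
    (ε : ℝ) (hε0 : 0 < ε)
    (S : ℕ → A → Finset N) (T : ℕ)
    (h0 : G.valid (S 0))
    (hstep : ∀ t < T, ∃ i : A, ∃ s ∈ G.strat i,
      S (t + 1) = Function.update (S t) i s ∧
      (1 + ε) * G.util (S t) i < G.util (S (t + 1)) i) :
    (T : ℝ) < ε⁻¹ * (Fintype.card N : ℝ) * (Fintype.card A : ℝ) * harm (Fintype.card A) := by
  obtain ⟨i⟩ := ‹Nonempty A›
  have hvalid := G.valid_of_isImprovingStep h0 hstep
  have hgrowth : G.pot (S 0) + T * (ε / Fintype.card A) ≤ G.pot (S T) :=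
    add_mul_le_of_add_le_succ fun t ht =>
      (CAG.IsImprovingStep.pot_add_lt hw hne hε0 (hstep t ht) (hvalid t ht.le)).le
  have hstart : 0 < G.pot (S 0) := CAG.pot_pos (hne i _ (h0 i))
  have hend : G.pot (S T) ≤ Fintype.card N * harm (Fintype.card A) := by
    simpa [hv] using CAG.pot_le hw (S T)
  have hm : (0 : ℝ) < Fintype.card A := by exact_mod_cast Fintype.card_pos
  rw [show ε⁻¹ * (Fintype.card N : ℝ) * Fintype.card A * harm (Fintype.card A) =
    Fintype.card N * harm (Fintype.card A) / (ε / Fintype.card A) by field_simp,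
    lt_div_iff₀ (by positivity)]
  linarith

/-- Best-response-dynamics bound.  In a symmetric-weight, unit-value game
whose strategies are all nonempty, any sequence of `(1+ε)`-improving unilateral
deviations has length less than `ε⁻¹ · n · m · H_m`. -/
theorem best_response_dynamics_length_bound [DecidableEq A] [Nonempty N] [Nonempty A]
    (G : CAG N A) (hw : ∀ i, G.w i = 1) (hv : ∀ j, G.v j = 1)
    (hne : ∀ i, ∀ s ∈ G.strat i, s.Nonempty)
    (ε : ℝ) (hε0 : 0 < ε) (hε1 : ε < 1)
    (S : ℕ → A → Finset N) (T : ℕ)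
    (h0 : G.valid (S 0))
    (hstep : ∀ t < T, ∃ i : A, ∃ s ∈ G.strat i,
      S (t + 1) = Function.update (S t) i s ∧
      (1 + ε) * G.util (S t) i < G.util (S (t + 1)) i) :
    (T : ℝ) < ε⁻¹ * (Fintype.card N : ℝ) * (Fintype.card A : ℝ) * harm (Fintype.card A) :=
  best_response_dynamics_length_bound_general G hw hv hne ε hε0 S T h0 hstep
end

section
/- Consider a customer attraction game and define ψ(t) = ln(max(e^{-1}, t)) and Ψ(S) = ∑_{j∈N} v_j · ψ(c(j,S)). Let w_max = max_{i∈A} w_i and α = ln(1 + w_max) + 1. Then any strategy profile S^{Ψ*} that maximizes Ψ over the joint strategy space is an α-approximate pure Nash equilibrium. In particular, every customer attraction game admits an (ln(1+w_max)+1)-approximate pure Nash equilibrium. -/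
open Finset

variable {N A : Type*} [Fintype N] [Fintype A] [DecidableEq N]

/-- `ψ(t) = ln(max(e⁻¹, t))`. -/
noncomputable def psi (t : ℝ) : ℝ := Real.log (max (Real.exp (-1)) t)

/-- The potential `Ψ(S) = ∑_j v_j ψ(c(j,S))`. -/
noncomputable def CAG.Psi (G : CAG N A) (S : A → Finset N) : ℝ :=
  ∑ j : N, (G.v j : ℝ) * psi (G.load S j : ℝ)

/-- `α`-approximate pure Nash equilibrium. -/
def CAG.approxPNE [DecidableEq A] (G : CAG N A) (α : ℝ) (S : A → Finset N) : Prop :=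
  G.valid S ∧ ∀ i, ∀ S' ∈ G.strat i,
    G.util (Function.update S i S') i ≤ α * G.util S i


/-!
On integer loads `ψ(0) = -1` and `ψ = ln` on `[1, ∞)`, so for every load `c ∈ ℕ` and weight
`1 ≤ w ≤ w_max` the increment of `ψ` is comparable to the share `w / (c + w)` that an agent of
weight `w` receives from a node of load `c + w`:
`w / (c + w) ≤ ψ(c + w) - ψ(c) ≤ (ln (1 + w_max) + 1) · w / (c + w)`.
Summing over nodes, a unilateral deviation of agent `i` raises `U_i` to at most `α U_i(S)` plus the
increase of `Ψ`, which is nonpositive at a maximizer of `Ψ`. Maximizers exist since there are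
finitely many profiles.
-/

open Real

lemma psi_zero : psi 0 = -1 := by
  rw [psi, max_eq_left (exp_pos _).le, log_exp]

lemma psi_of_one_le {t : ℝ} (ht : 1 ≤ t) : psi t = log t := by
  have : exp (-1) ≤ 1 := exp_le_one_iff.mpr (by norm_num)
  rw [psi, max_eq_right (by linarith)]

lemma log_one_add_le_mul_div {t W : ℝ} (ht : 0 < t) (htW : t ≤ W) :
    log (1 + t) ≤ (log (1 + W) + 1) * (t / (1 + t)) := by
  have hlog_le : log (1 + t) ≤ t := by linarith [log_le_sub_one_of_pos (by linarith : 0 < 1 + t)]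
  have hlog_mono : log (1 + t) ≤ log (1 + W) := log_le_log (by linarith) (by linarith)
  rw [← mul_div_assoc, le_div_iff₀ (by linarith)]
  nlinarith [mul_le_mul_of_nonneg_left hlog_mono ht.le]

section LoadIncrement

variable {c : ℕ} {w : ℝ}

lemma div_add_le_psi_add_sub_psi (hw : 1 ≤ w) : w / (c + w) ≤ psi (c + w) - psi c := by
  rcases Nat.eq_zero_or_pos c with rfl | hc
  · rw [Nat.cast_zero, zero_add, div_self (by linarith), psi_of_one_le hw, psi_zero]
    linarith [log_nonneg hw]
  · have hc : (1 : ℝ) ≤ c := by exact_mod_cast hc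
    rw [psi_of_one_le (by linarith), psi_of_one_le hc, ← log_div (by linarith) (by linarith)]
    have := one_sub_inv_le_log_of_pos (x := (c + w) / c) (by positivity)
    rwa [inv_div, one_sub_div (by linarith), add_sub_cancel_left] at this

lemma psi_add_sub_psi_le {W : ℝ} (hw : 1 ≤ w) (hwW : w ≤ W) :
    psi (c + w) - psi c ≤ (log (1 + W) + 1) * (w / (c + w)) := by
  rcases Nat.eq_zero_or_pos c with rfl | hc
  · rw [Nat.cast_zero, zero_add, div_self (by linarith), psi_of_one_le hw, psi_zero]
    linarith [log_le_log (by linarith) (by linarith : w ≤ 1 + W)]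
  · have hc : (1 : ℝ) ≤ c := by exact_mod_cast hc
    -- with `t = w / c ≤ w`, the increment is `log (1 + t)` and `w / (c + w) = t / (1 + t)`
    have hwc : w / (c + w) = w / c / (1 + w / c) := by field_simp
    rw [psi_of_one_le (by linarith), psi_of_one_le hc, ← log_div (by linarith) (by linarith),
      hwc, add_div, div_self (by linarith)]
    refine log_one_add_le_mul_div (by positivity) (le_trans ?_ hwW)
    exact div_le_self (by linarith) hc

end LoadIncrement

namespace CAG

variable (G : CAG N A)

lemma load_update_add [DecidableEq A] (S : A → Finset N) (i : A) (S' : Finset N) (j : N) :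
    G.load (Function.update S i S') j + (if j ∈ S i then G.w i else 0)
      = G.load S j + (if j ∈ S' then G.w i else 0) := by
  simp only [load, ← add_sum_erase _ _ (mem_univ i), Function.update_self]
  rw [sum_congr rfl fun x hx => by rw [Function.update_of_ne (ne_of_mem_erase hx)]]
  ring

noncomputable def share (S : A → Finset N) (i : A) (j : N) : ℝ :=
  if j ∈ S i then (G.v j : ℝ) * G.w i / G.load S j else 0

lemma util_eq_sum_share (S : A → Finset N) (i : A) : G.util S i = ∑ j, G.share S i j := by
  simp only [util, share, sum_ite_mem, univ_inter]

lemma share_update_le [DecidableEq A] {W : ℝ} (S : A → Finset N) (i : A) (S' : Finset N) (j : N)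
    (hW : (G.w i : ℝ) ≤ W) :
    G.share (Function.update S i S') i j ≤ (log (1 + W) + 1) * G.share S i j
      + G.v j * (psi (G.load (Function.update S i S') j) - psi (G.load S j)) := by
  have hload := G.load_update_add S i S' j
  have hw : (1 : ℝ) ≤ G.w i := by exact_mod_cast G.w_pos i
  have hv : (0 : ℝ) ≤ G.v j := by positivity
  simp only [share, Function.update_self]
  generalize G.load (Function.update S i S') j = c at hload ⊢
  by_cases hj' : j ∈ S' <;> by_cases hj : j ∈ S i <;>
    simp only [hj', hj, if_true, if_false] at hload ⊢
  · have hα : 1 ≤ log (1 + W) + 1 := by linarith [log_nonneg (by linarith : (1 : ℝ) ≤ 1 + W)]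
    rw [show c = G.load S j by omega, sub_self, mul_zero, add_zero]
    exact le_mul_of_one_le_left (by positivity) hα
  · rw [show c = G.load S j + G.w i by omega, Nat.cast_add, mul_zero, zero_add, mul_div_assoc]
    exact mul_le_mul_of_nonneg_left (div_add_le_psi_add_sub_psi hw) hv
  · rw [show G.load S j = c + G.w i by omega, Nat.cast_add, mul_div_assoc]
    linear_combination mul_le_mul_of_nonneg_left (psi_add_sub_psi_le (c := c) hw hW) hv
  · rw [show c = G.load S j by omega]
    simp

lemma sum_mul_psi_sub (S T : A → Finset N) :
    ∑ j, (G.v j : ℝ) * (psi (G.load T j) - psi (G.load S j)) = G.Psi T - G.Psi S := by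
  simp only [Psi, mul_sub, sum_sub_distrib]

lemma util_update_le [DecidableEq A] {W : ℝ} (S : A → Finset N) (i : A) (S' : Finset N)
    (hW : (G.w i : ℝ) ≤ W) :
    G.util (Function.update S i S') i
      ≤ (log (1 + W) + 1) * G.util S i + (G.Psi (Function.update S i S') - G.Psi S) := by
  simp only [util_eq_sum_share, ← sum_mul_psi_sub, mul_sum, ← sum_add_distrib]
  exact sum_le_sum fun j _ => G.share_update_le S i S' j hW

lemma approxPNE_of_forall_Psi_le [DecidableEq A] {W : ℝ} (hW : ∀ i, (G.w i : ℝ) ≤ W)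
    {S : A → Finset N} (hS : G.valid S) (hmax : ∀ S', G.valid S' → G.Psi S' ≤ G.Psi S) :
    G.approxPNE (log (1 + W) + 1) S := by
  refine ⟨hS, fun i S' hS' => ?_⟩
  have hT : G.valid (Function.update S i S') := fun k => by
    rcases eq_or_ne k i with rfl | hk
    · simpa using hS'
    · simpa [Function.update_of_ne hk] using hS k
  have := hmax _ hT
  linarith [G.util_update_le S i S' (hW i)]

lemma exists_valid_forall_Psi_le :
    ∃ S, G.valid S ∧ ∀ S', G.valid S' → G.Psi S' ≤ G.Psi S := by
  have : Nonempty {S : A → Finset N // G.valid S} :=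
    ⟨⟨fun i => (G.strat_ne i).choose, fun i => (G.strat_ne i).choose_spec⟩⟩
  obtain ⟨⟨S, hS⟩, hmax⟩ := Finite.exists_max fun S : {S // G.valid S} => G.Psi S
  exact ⟨S, hS, fun S' hS' => hmax ⟨S', hS'⟩⟩

end CAG

theorem Psi_maximizer_is_approx_PNE_general [DecidableEq A]
    (G : CAG N A) :
    (∀ S : A → Finset N, G.valid S → (∀ S', G.valid S' → G.Psi S' ≤ G.Psi S) →
      G.approxPNE (Real.log (1 + (↑(Finset.univ.sup G.w) : ℝ)) + 1) S) ∧
    ∃ S : A → Finset N,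
      G.approxPNE (Real.log (1 + (↑(Finset.univ.sup G.w) : ℝ)) + 1) S := by
  have hW : ∀ i, (G.w i : ℝ) ≤ (univ.sup G.w : ℕ) := fun i => by
    exact_mod_cast le_sup (mem_univ i)
  have hmaximizer := fun S (hS : G.valid S) hmax => G.approxPNE_of_forall_Psi_le hW hS hmax
  obtain ⟨S, hS, hmax⟩ := G.exists_valid_forall_Psi_le
  exact ⟨hmaximizer, S, hmaximizer S hS hmax⟩

/-- Any maximizer of `Ψ` over the joint strategy space is an
`α`-approximate PNE with `α = ln(1 + w_max) + 1`; in particular such an approximate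
equilibrium always exists. -/
theorem Psi_maximizer_is_approx_PNE [DecidableEq A] [Nonempty A]
    (G : CAG N A) :
    (∀ S : A → Finset N, G.valid S → (∀ S', G.valid S' → G.Psi S' ≤ G.Psi S) →
      G.approxPNE (Real.log (1 + (↑(Finset.univ.sup G.w) : ℝ)) + 1) S) ∧
    ∃ S : A → Finset N,
      G.approxPNE (Real.log (1 + (↑(Finset.univ.sup G.w) : ℝ)) + 1) S :=
  Psi_maximizer_is_approx_PNE_general G
end
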